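/- For every integer M ≥ 1, f_M has no nontrivial minimum: for all integers a ≤ n ≤ b, one has f_M(n) ≥ min(f_M(a), f_M(b)). In other words, f_M is quasiconcave on ℤ: it is nondecreasing up to its maximum and nonincreasing thereafter. -/

import Mathlib

/-!
Conditioning on the first coordinate gives `f_{M+1}(n) = ∑_{k=0}^{N_K} f_M(n - k)`, a sliding-window
sum of `f_M`. If `g` is symmetric about `s / 2` and nondecreasing up to it, then its window sum of
width `K + 1` is symmetric about `(s + K) / 2`, and sliding the window one step right trades
`g(n - K)` for `g(n + 1) ≥ g(n - K)` as long as `2n + 1 ≤ s + K`. By induction `f_M` is symmetric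
about `M N_K / 2` and unimodal, hence quasiconcave.
-/

def f (NK M : ℕ) (n : ℤ) : ℕ :=
  (Finset.univ.filter
    (fun t : Fin M → Fin (NK + 1) => (∑ i, ((t i : ℕ) : ℤ)) = n)).card

open Finset

/-- `g` is symmetric about `s / 2` and nondecreasing up to it; `mono` is phrased so that it also
covers pairs `m ≤ n` straddling the centre, with `n` no farther from it than `m`. -/
structure IsSymmUnimodal {β : Type*} [Preorder β] (s : ℤ) (g : ℤ → β) : Prop where
  symm : ∀ n, g (s - n) = g n
  mono : ∀ ⦃m n⦄, m ≤ n → m + n ≤ s → g m ≤ g n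

namespace IsSymmUnimodal

variable {β : Type*} {s : ℤ} {g : ℤ → β}

theorem of_step [Preorder β] (symm : ∀ n, g (s - n) = g n)
    (step : ∀ k, 2 * k + 1 ≤ s → g k ≤ g (k + 1)) : IsSymmUnimodal s g := by
  have left : ∀ m n, m ≤ n → 2 * n ≤ s → g m ≤ g n := by
    intro m n hmn
    induction n, hmn using Int.leInduction with
    | base => exact fun _ => le_rfl
    | succ n _ ih => exact fun hn => (ih (by omega)).trans (step n (by omega))
  refine ⟨symm, fun m n hmn hs => ?_⟩
  rcases le_or_gt (2 * n) s with hn | hn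
  · exact left m n hmn hn
  · exact symm n ▸ left m (s - n) (by omega) (by omega)

theorem min_le [LinearOrder β] (hg : IsSymmUnimodal s g) {a n b : ℤ} (han : a ≤ n)
    (hnb : n ≤ b) : min (g a) (g b) ≤ g n := by
  rcases le_or_gt (a + n) s with hle | hlt
  · exact (min_le_left _ _).trans (hg.mono han hle)
  · calc min (g a) (g b) ≤ g b := min_le_right _ _
      _ = g (s - b) := (hg.symm b).symm
      _ ≤ g (s - n) := hg.mono (by omega) (by omega)
      _ = g n := hg.symm n

theorem sum_range_sub [AddCommMonoid β] [PartialOrder β] [IsOrderedAddMonoid β]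
    (hg : IsSymmUnimodal s g) (K : ℕ) :
    IsSymmUnimodal (s + K) (fun n => ∑ k ∈ range (K + 1), g (n - k)) := by
  refine of_step (fun n => ?_) (fun n hn => ?_)
  · rw [← sum_range_reflect]
    refine sum_congr rfl fun k hk => ?_
    rw [← hg.symm]
    congr 1
    have := mem_range.mp hk
    omega
  · rw [sum_range_succ, sum_range_succ' _ K]
    simp only [Nat.cast_add, Nat.cast_one, Nat.cast_zero, add_sub_add_right_eq_sub, sub_zero]
    gcongr
    exact hg.mono (by omega) (by omega)

end IsSymmUnimodal

theorem f_zero (NK : ℕ) (n : ℤ) : f NK 0 n = if n = 0 then 1 else 0 := by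
  by_cases h : n = 0 <;> simp [f, h, eq_comm]

theorem f_succ (NK M : ℕ) (n : ℤ) :
    f NK (M + 1) n = ∑ k ∈ range (NK + 1), f NK M (n - k) := by
  simp only [f, card_filter]
  rw [← (Fin.consEquiv fun _ : Fin (M + 1) => Fin (NK + 1)).sum_comp, Fintype.sum_prod_type,
    ← Fin.sum_univ_eq_sum_range (fun k => ∑ t : Fin M → Fin (NK + 1), _)]
  refine sum_congr rfl fun k _ => sum_congr rfl fun t _ => ?_
  simp [Fin.sum_univ_succ, eq_sub_iff_add_eq']

theorem f_isSymmUnimodal (NK M : ℕ) : IsSymmUnimodal (M * NK : ℤ) (f NK M) := by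
  induction M with
  | zero =>
    refine .of_step (fun n => ?_) (fun k hk => ?_)
    · simp [f_zero]
    · simp [f_zero, show k ≠ 0 by omega]
  | succ M ih =>
    have hsum : f NK (M + 1) = fun n => ∑ k ∈ range (NK + 1), f NK M (n - k) :=
      funext (f_succ NK M)
    rw [hsum, Nat.cast_succ, add_one_mul]
    exact ih.sum_range_sub NK

theorem stmt6_general (NK : ℕ) (M : ℕ)
    (a n b : ℤ) (han : a ≤ n) (hnb : n ≤ b) :
    min (f NK M a) (f NK M b) ≤ f NK M n :=
  (f_isSymmUnimodal NK M).min_le han hnb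

/-- `f_M` has no nontrivial minimum (quasiconcavity on `ℤ`):
for `a ≤ n ≤ b`, `f_M(n) ≥ min(f_M(a), f_M(b))`. -/
theorem stmt6 (NK : ℕ) (hNK : 0 < NK) (M : ℕ) (hM : 1 ≤ M)
    (a n b : ℤ) (han : a ≤ n) (hnb : n ≤ b) :
    min (f NK M a) (f NK M b) ≤ f NK M n :=
  stmt6_general NK M a n b han hnb
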